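/- arXiv:1204.6486 — 2 statements merged into one kernel-verified Lean document; each statement's English description precedes it below -/
import Mathlib

section
/- Every MV-algebra M, with the partial operation a + b := a ⊕ b defined exactly when a ≤ b* (equivalently, when a ⊙ b = 0), constants 0 and 1, is an effect algebra satisfying the Riesz Decomposition Property: whenever a₁ + a₂ = b₁ + b₂, there exist c₁₁, c₁₂, c₂₁, c₂₂ with a₁ = c₁₁ + c₁₂, a₂ = c₂₁ + c₂₂, b₁ = c₁₁ + c₂₁, b₂ = c₁₂ + c₂₂ (all sums defined). -/
structure EffectAlgebra (M : Type*) where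
  add : M → M → Option M
  zero : M
  one : M
  add_comm : ∀ a b, add a b = add b a
  add_assoc : ∀ a b c ab abc, add a b = some ab → add ab c = some abc →
    ∃ bc, add b c = some bc ∧ add a bc = some abc
  orth_exists : ∀ a, ∃! a', add a a' = some one
  eq_zero_of_add_one : ∀ a b, add a one = some b → a = zero

namespace EffectAlgebra

variable {M : Type*}

/-- The induced order: `a ≤ b` iff there is `c` with `a + c = b`. -/
def le (E : EffectAlgebra M) (a b : M) : Prop := ∃ c, E.add a c = some b

/-- The orthosupplement `a'`, the unique element with `a + a' = 1`. -/
noncomputable def orth (E : EffectAlgebra M) (a : M) : M :=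
  (E.orth_exists a).choose

/-- The Riesz Decomposition Property. -/
def RDP (E : EffectAlgebra M) : Prop :=
  ∀ a₁ a₂ b₁ b₂ s, E.add a₁ a₂ = some s → E.add b₁ b₂ = some s →
    ∃ c₁₁ c₁₂ c₂₁ c₂₂, E.add c₁₁ c₁₂ = some a₁ ∧ E.add c₂₁ c₂₂ = some a₂ ∧
      E.add c₁₁ c₂₁ = some b₁ ∧ E.add c₁₂ c₂₂ = some b₂

end EffectAlgebra

/-- An MV-algebra as an algebra (M; ⊕, *, 0, 1). -/
structure MValg (M : Type*) where
  oplus : M → M → M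
  star : M → M
  zero : M
  one : M
  oplus_comm : ∀ a b, oplus a b = oplus b a
  oplus_assoc : ∀ a b c, oplus (oplus a b) c = oplus a (oplus b c)
  oplus_zero : ∀ a, oplus a zero = a
  oplus_one : ∀ a, oplus a one = one
  star_star : ∀ a, star (star a) = a
  oplus_star : ∀ a, oplus a (star a) = one
  star_zero : star zero = one
  luk : ∀ a b, oplus (star (oplus (star a) b)) b = oplus (star (oplus a (star b))) a

/-- The MV-order: a ≤ b iff a* ⊕ b = 1. -/
def MValg.le {M : Type*} (A : MValg M) (a b : M) : Prop :=
  A.oplus (A.star a) b = A.one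

namespace MValg

variable {M : Type*} (A : MValg M)

lemma oplus_left_comm (a b c : M) :
    A.oplus a (A.oplus b c) = A.oplus b (A.oplus a c) := by
  rw [← A.oplus_assoc, A.oplus_comm a b, A.oplus_assoc]

lemma one_star : A.star A.one = A.zero := by
  rw [← A.star_zero, A.star_star]

lemma zero_oplus (a : M) : A.oplus A.zero a = a := by
  rw [A.oplus_comm, A.oplus_zero]

lemma one_oplus (a : M) : A.oplus A.one a = A.one := by
  rw [A.oplus_comm, A.oplus_one]

lemma le_refl' (a : M) : A.le a a := by
  unfold le; rw [A.oplus_comm, A.oplus_star]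

/-- a ∨ b -/
def lor (a b : M) : M := A.oplus (A.star (A.oplus (A.star a) b)) b

lemma lor_comm (a b : M) : A.lor a b = A.lor b a := by
  unfold lor
  rw [A.luk a b, A.oplus_comm a (A.star b)]

lemma lor_eq_of_le {a b : M} (h : A.le a b) : A.lor a b = b := by
  unfold le at h
  unfold lor
  rw [h, A.one_star, A.zero_oplus]

lemma le_lor_left (a b : M) : A.le a (A.lor a b) := by
  unfold le lor
  rw [A.oplus_left_comm, A.oplus_comm (A.star (A.oplus (A.star a) b)), A.oplus_star]

lemma le_trans' {a b c : M} (h1 : A.le a b) (h2 : A.le b c) : A.le a c := by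
  unfold le at *
  have hc : c = A.oplus (A.star (A.oplus (A.star c) b)) b := by
    have h := (A.lor_comm c b).trans (A.lor_eq_of_le h2)
    exact h.symm
  conv_lhs => rw [hc]
  rw [A.oplus_left_comm, h1, A.oplus_one]

lemma le_antisymm' {a b : M} (h1 : A.le a b) (h2 : A.le b a) : a = b :=
  ((A.lor_eq_of_le h2).symm.trans (A.lor_comm b a)).trans (A.lor_eq_of_le h1)

lemma summand_le (a b : M) : A.le a (A.oplus a b) := by
  unfold le
  rw [← A.oplus_assoc, A.oplus_comm (A.star a) a, A.oplus_star, A.one_oplus]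

lemma le_oplus_left (a b : M) : A.le b (A.oplus a b) := by
  rw [A.oplus_comm]; exact A.summand_le b a

lemma le_iff_exists {a b : M} : A.le a b ↔ ∃ c, A.oplus a c = b := by
  constructor
  · intro h
    refine ⟨A.star (A.oplus (A.star b) a), ?_⟩
    rw [A.oplus_comm]
    exact (A.lor_comm b a).trans (A.lor_eq_of_le h)
  · rintro ⟨c, rfl⟩; exact A.summand_le a c

lemma oplus_le_oplus_left {a b : M} (h : A.le a b) (c : M) :
    A.le (A.oplus c a) (A.oplus c b) := by
  obtain ⟨t, rfl⟩ := A.le_iff_exists.1 h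
  exact A.le_iff_exists.2 ⟨t, A.oplus_assoc c a t⟩

lemma oplus_le_oplus_right {a b : M} (h : A.le a b) (c : M) :
    A.le (A.oplus a c) (A.oplus b c) := by
  rw [A.oplus_comm a c, A.oplus_comm b c]
  exact A.oplus_le_oplus_left h c

/-- a ⊖ b = a ⊙ b* -/
def sub (a b : M) : M := A.star (A.oplus (A.star a) b)

lemma sub_oplus {a b : M} (h : A.le b a) : A.oplus b (A.sub a b) = a := by
  rw [A.oplus_comm]
  exact (A.lor_comm a b).trans (A.lor_eq_of_le h)

lemma le_star_sub (a b : M) : A.le b (A.star (A.sub a b)) := by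
  unfold sub
  rw [A.star_star]
  exact A.le_oplus_left (A.star a) b

lemma sub_le_star (a b : M) : A.le (A.sub a b) (A.star b) := by
  unfold le sub
  rw [A.star_star, A.oplus_assoc, A.oplus_star, A.oplus_one]

lemma sub_le (a b : M) : A.le (A.sub a b) a := by
  unfold le sub
  rw [A.star_star, A.oplus_comm (A.star a) b, A.oplus_assoc, A.oplus_comm (A.star a) a,
    A.oplus_star, A.oplus_one]

lemma le_star_comm {a b : M} : A.le a (A.star b) ↔ A.le b (A.star a) := by
  unfold le
  rw [A.oplus_comm]

lemma star_le_star {a b : M} (h : A.le a b) : A.le (A.star b) (A.star a) := by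
  unfold le at *
  rw [A.star_star, A.oplus_comm]
  exact h

lemma cancel {a b : M} (h : A.le b (A.star a)) : A.sub (A.oplus a b) a = b := by
  have h' : A.le a (A.star b) := A.le_star_comm.2 h
  have key : A.oplus (A.star (A.oplus a b)) a = A.star b := by
    have h2 := (A.lor_comm (A.star b) a).trans (A.lor_eq_of_le h')
    unfold lor at h2
    rw [A.star_star] at h2
    rw [A.oplus_comm a b]
    exact h2
  unfold sub
  rw [key, A.star_star]

lemma oplus_le {x y z : M} (hx : A.le x z) (hy : A.le y (A.sub z x)) :
    A.le (A.oplus x y) z := by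
  have h := A.oplus_le_oplus_left hy x
  rwa [A.sub_oplus hx] at h

lemma sub_symm (a b : M) :
    A.oplus (A.star a) (A.sub a b) = A.oplus (A.star b) (A.sub b a) := by
  have h1 : A.oplus (A.star a) (A.sub a b) = A.lor (A.star b) (A.star a) := by
    unfold lor sub
    rw [A.star_star, A.oplus_comm b (A.star a),
      A.oplus_comm (A.star a) (A.star (A.oplus (A.star a) b))]
  have h2 : A.oplus (A.star b) (A.sub b a) = A.lor (A.star a) (A.star b) := by
    unfold lor sub
    rw [A.star_star, A.oplus_comm a (A.star b),
      A.oplus_comm (A.star b) (A.star (A.oplus (A.star b) a))]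
  rw [h1, h2, A.lor_comm]

lemma ac4 (a b c d : M) :
    A.oplus (A.oplus a b) (A.oplus c d) = A.oplus (A.oplus a c) (A.oplus b d) := by
  rw [A.oplus_assoc, A.oplus_left_comm b c, ← A.oplus_assoc]

open Classical in
lemma add_iff (a b c : M) :
    (if A.le a (A.star b) then some (A.oplus a b) else none) = some c ↔
      A.le a (A.star b) ∧ c = A.oplus a b := by
  split_ifs with h
  · simp [h, eq_comm]
  · simp [h]

open Classical in
/-- The effect algebra induced by an MV-algebra. -/
noncomputable def toEffect : EffectAlgebra M where
  add a b := if A.le a (A.star b) then some (A.oplus a b) else none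
  zero := A.zero
  one := A.one
  add_comm := by
    intro a b
    by_cases h : A.le a (A.star b)
    · rw [if_pos h, if_pos (A.le_star_comm.1 h), A.oplus_comm]
    · rw [if_neg h, if_neg (fun h' => h (A.le_star_comm.1 h'))]
  add_assoc := by
    intro a b c ab abc h1 h2
    obtain ⟨h1le, rfl⟩ := (A.add_iff a b ab).1 h1
    obtain ⟨h2le, rfl⟩ := (A.add_iff _ c abc).1 h2
    have h1' : A.le b (A.star a) := A.le_star_comm.1 h1le
    have hb : A.le b (A.star c) :=
      A.le_trans' (A.le_oplus_left a b) h2le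
    have hc : A.le c (A.star (A.oplus a b)) := A.le_star_comm.1 h2le
    have e1 : A.oplus b (A.star (A.oplus a b)) = A.star a := by
      have h3 : A.lor (A.star a) b = A.oplus (A.star (A.oplus a b)) b := by
        unfold lor; rw [A.star_star]
      rw [A.oplus_comm, ← h3, A.lor_comm, A.lor_eq_of_le h1']
    have hbc : A.le (A.oplus b c) (A.star a) := by
      have h4 := A.oplus_le_oplus_left hc b
      rwa [e1] at h4
    refine ⟨A.oplus b c, (A.add_iff b c _).2 ⟨hb, rfl⟩,
      (A.add_iff a _ _).2 ⟨A.le_star_comm.1 hbc, A.oplus_assoc a b c⟩⟩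
  orth_exists := by
    intro a
    refine ⟨A.star a, (A.add_iff a _ _).2 ⟨?_, (A.oplus_star a).symm⟩, ?_⟩
    · show A.le a (A.star (A.star a))
      rw [A.star_star]; exact A.le_refl' a
    · intro b hb
      obtain ⟨hle, hval⟩ := (A.add_iff a b _).1 hb
      have h1 : A.oplus a (A.sub (A.star b) a) = A.star b := A.sub_oplus hle
      have h2 : A.sub (A.star b) a = A.zero := by
        unfold sub
        rw [A.star_star, A.oplus_comm b a, ← hval, A.one_star]
      rw [h2, A.oplus_zero] at h1
      rw [← A.star_star b, ← h1]
  eq_zero_of_add_one := by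
    intro a b h
    obtain ⟨hle, -⟩ := (A.add_iff a _ b).1 h
    have hle' : A.oplus (A.star a) (A.star A.one) = A.one := hle
    rw [A.one_star, A.oplus_zero] at hle'
    rw [← A.star_star a, hle', A.one_star]

open Classical in
lemma toEffect_add (a b c : M) :
    (A.toEffect).add a b = some c ↔ A.le a (A.star b) ∧ c = A.oplus a b :=
  A.add_iff a b c

end MValg

theorem mv_effectAlgebra_rdp {M : Type*} (A : MValg M) :
    ∃ E : EffectAlgebra M,
      E.zero = A.zero ∧ E.one = A.one ∧
      (∀ a b c, E.add a b = some c ↔ (A.le a (A.star b) ∧ c = A.oplus a b)) ∧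
      E.RDP := by
  refine ⟨A.toEffect, rfl, rfl, A.toEffect_add, ?_⟩
  intro a₁ a₂ b₁ b₂ s h1 h2
  obtain ⟨hd1, hs1⟩ := (A.toEffect_add a₁ a₂ s).1 h1
  obtain ⟨hd2, hs2⟩ := (A.toEffect_add b₁ b₂ s).1 h2
  have hs : A.oplus b₁ b₂ = A.oplus a₁ a₂ := by rw [← hs1, ← hs2]
  set e₁ := A.sub a₁ b₁ with he₁
  set e₂ := A.sub b₁ a₁ with he₂
  set d := A.sub a₁ e₁ with hdd
  set c₂₂ := A.sub b₂ e₁ with hc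
  have hE1a : A.le e₁ a₁ := A.sub_le a₁ b₁
  have va1 : A.oplus d e₁ = a₁ := by
    rw [A.oplus_comm]; exact A.sub_oplus hE1a
  have hd_eq : d = A.sub b₁ e₂ := congrArg A.star (A.sub_symm a₁ b₁)
  have hE2b : A.le e₂ b₁ := A.sub_le b₁ a₁
  have vb1 : A.oplus d e₂ = b₁ := by
    rw [A.oplus_comm, hd_eq]; exact A.sub_oplus hE2b
  have hE1b2 : A.le e₁ b₂ := by
    show A.oplus (A.star e₁) b₂ = A.one
    rw [he₁]
    unfold MValg.sub
    rw [A.star_star, A.oplus_assoc, hs, ← A.oplus_assoc,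
      A.oplus_comm (A.star a₁) a₁, A.oplus_star, A.one_oplus]
  have vb2 : A.oplus e₁ c₂₂ = b₂ := A.sub_oplus hE1b2
  have hb2b1a1 : A.le b₂ (A.oplus (A.star b₁) a₁) :=
    A.le_trans' (A.le_star_comm.1 hd2) (A.summand_le (A.star b₁) a₁)
  have hb' : A.oplus (A.star b₂) (A.oplus (A.star b₁) a₁) = A.one := hb2b1a1
  have def2 : A.le e₂ (A.star c₂₂) := by
    show A.oplus (A.star e₂) (A.star c₂₂) = A.one
    rw [he₂, hc]
    unfold MValg.sub
    rw [A.star_star, A.star_star, ← A.oplus_assoc,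
      A.oplus_comm (A.oplus (A.star b₁) a₁) (A.star b₂), hb', A.one_oplus]
  have le_e2a1 : A.le e₂ (A.star a₁) := A.sub_le_star b₁ a₁
  have key1 : A.oplus a₁ e₂ = A.oplus b₁ e₁ := by
    rw [A.oplus_comm a₁ e₂, A.oplus_comm b₁ e₁, he₁, he₂]
    exact A.lor_comm b₁ a₁
  have key2 : A.le (A.oplus a₁ e₂) (A.oplus (A.star b₂) e₁) := by
    rw [key1]; exact A.oplus_le_oplus_right hd2 e₁
  have hcle : A.le c₂₂ (A.sub (A.star a₁) e₂) := by
    have h5 := A.star_le_star key2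
    rw [hc]
    unfold MValg.sub
    rw [A.star_star]
    exact h5
  have hfinal : A.le (A.oplus e₂ c₂₂) (A.star a₁) := A.oplus_le le_e2a1 hcle
  have ha : A.oplus a₁ (A.oplus e₂ c₂₂) = A.oplus a₁ a₂ := by
    calc A.oplus a₁ (A.oplus e₂ c₂₂)
        = A.oplus (A.oplus d e₁) (A.oplus e₂ c₂₂) := by rw [va1]
      _ = A.oplus (A.oplus d e₂) (A.oplus e₁ c₂₂) := A.ac4 d e₁ e₂ c₂₂
      _ = A.oplus b₁ b₂ := by rw [vb1, vb2]
      _ = A.oplus a₁ a₂ := hs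
  have va2 : A.oplus e₂ c₂₂ = a₂ := by
    have t1 := A.cancel (A.le_star_comm.1 hd1)
    have t2 := A.cancel hfinal
    rw [ha, t1] at t2
    exact t2.symm
  refine ⟨d, e₁, e₂, c₂₂,
    (A.toEffect_add _ _ _).2 ⟨A.sub_le_star a₁ e₁, va1.symm⟩,
    (A.toEffect_add _ _ _).2 ⟨def2, va2.symm⟩,
    (A.toEffect_add _ _ _).2 ⟨by rw [hd_eq]; exact A.sub_le_star b₁ e₂, vb1.symm⟩,
    (A.toEffect_add _ _ _).2 ⟨A.le_star_sub b₂ e₁, vb2.symm⟩⟩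
end

section
/- In an effect algebra M with RDP, the set Sh(M) of sharp elements is closed under orthosupplement and contains 0 and 1, and if a, b ∈ Sh(M) and a + b is defined, then a + b ∈ Sh(M). -/
namespace EffectAlgebra

variable {M : Type*} (E : EffectAlgebra M)

lemma orth_spec (a : M) : E.add a (E.orth a) = some E.one :=
  (E.orth_exists a).choose_spec.1

lemma orth_unique {a x : M} (h : E.add a x = some E.one) : x = E.orth a :=
  (E.orth_exists a).choose_spec.2 x h

lemma orth_spec' (a : M) : E.add (E.orth a) a = some E.one := by
  rw [E.add_comm]; exact E.orth_spec a

lemma orth_orth (a : M) : E.orth (E.orth a) = a :=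
  (E.orth_unique (E.orth_spec' a)).symm

lemma one_add_zero : E.add E.one E.zero = some E.one := by
  obtain ⟨x, hx, _⟩ := E.orth_exists E.one
  have hx' : E.add x E.one = some E.one := by rw [E.add_comm]; exact hx
  have := E.eq_zero_of_add_one x E.one hx'
  rwa [this] at hx

lemma zero_add_one : E.add E.zero E.one = some E.one := by
  rw [E.add_comm]; exact E.one_add_zero

lemma orth_one : E.orth E.one = E.zero :=
  (E.orth_unique E.one_add_zero).symm

lemma add_zero (a : M) : E.add a E.zero = some a := by
  obtain ⟨bc, h1, h2⟩ := E.add_assoc (E.orth a) a E.zero E.one E.one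
    (E.orth_spec' a) E.one_add_zero
  have : bc = E.orth (E.orth a) := E.orth_unique h2
  rw [this, E.orth_orth] at h1
  exact h1

lemma zero_add (a : M) : E.add E.zero a = some a := by
  rw [E.add_comm]; exact E.add_zero a

lemma eq_zero_of_add_eq_zero {a b : M} (h : E.add a b = some E.zero) : a = E.zero := by
  obtain ⟨t, h1, h2⟩ := E.add_assoc a b E.one E.zero E.one h E.zero_add_one
  have hb := E.eq_zero_of_add_one b t h1
  rw [hb] at h1
  have : t = E.one := by
    have := E.zero_add E.one
    rw [this] at h1; exact (Option.some.inj h1).symm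
  rw [this] at h2
  exact E.eq_zero_of_add_one a E.one h2

lemma eq_zero_of_le_zero {a : M} (h : E.le a E.zero) : a = E.zero := by
  obtain ⟨c, hc⟩ := h
  exact E.eq_zero_of_add_eq_zero hc

lemma le_zero_self : E.le E.zero E.zero := ⟨E.zero, E.zero_add E.zero⟩

lemma le_trans {a b c : M} (h1 : E.le a b) (h2 : E.le b c) : E.le a c := by
  obtain ⟨x, hx⟩ := h1
  obtain ⟨y, hy⟩ := h2
  obtain ⟨z, hz1, hz2⟩ := E.add_assoc a x y b c hx hy
  exact ⟨z, hz2⟩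

/-- if a + b = c then orth c ≤ orth a -/
lemma orth_le_orth {a b c : M} (h : E.add a b = some c) :
    E.le (E.orth c) (E.orth a) := by
  obtain ⟨t, ht1, ht2⟩ := E.add_assoc a b (E.orth c) c E.one h (E.orth_spec c)
  have : t = E.orth a := E.orth_unique ht2
  rw [this] at ht1
  exact ⟨b, by rw [E.add_comm]; exact ht1⟩

end EffectAlgebra
theorem effectAlgebra_sharp_closed {M : Type*} (E : EffectAlgebra M) (hRDP : E.RDP) :
    (∀ b, E.le b E.zero → E.le b (E.orth E.zero) → E.le b E.zero) ∧
    (∀ b, E.le b E.one → E.le b (E.orth E.one) → E.le b E.zero) ∧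
    (∀ a, (∀ b, E.le b a → E.le b (E.orth a) → E.le b E.zero) →
      ∀ b, E.le b (E.orth a) → E.le b (E.orth (E.orth a)) → E.le b E.zero) ∧
    (∀ a b c, (∀ d, E.le d a → E.le d (E.orth a) → E.le d E.zero) →
      (∀ d, E.le d b → E.le d (E.orth b) → E.le d E.zero) →
      E.add a b = some c →
      ∀ d, E.le d c → E.le d (E.orth c) → E.le d E.zero) := by
  refine ⟨fun b h1 _ => h1, fun b _ h2 => by rwa [E.orth_one] at h2, ?_, ?_⟩
  · intro a ha b h1 h2
    rw [E.orth_orth] at h2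
    exact ha b h2 h1
  · intro a b c hsa hsb hab d hd1 hd2
    obtain ⟨x, hx⟩ := hd1
    obtain ⟨d₁, d₂, e₁, e₂, h₁, _, hA, hB⟩ := hRDP d x a b c hx hab
    -- d₁ ≤ a, d₂ ≤ b, d = d₁ + d₂
    have hd₁d : E.le d₁ d := ⟨d₂, h₁⟩
    have hd₂d : E.le d₂ d := ⟨d₁, by rw [E.add_comm]; exact h₁⟩
    have hca : E.le (E.orth c) (E.orth a) := E.orth_le_orth hab
    have hcb : E.le (E.orth c) (E.orth b) :=
      E.orth_le_orth (c := c) (by rw [E.add_comm]; exact hab)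
    have hd₁0 : d₁ = E.zero :=
      E.eq_zero_of_le_zero (hsa d₁ ⟨e₁, hA⟩
        (E.le_trans (E.le_trans hd₁d hd2) hca))
    have hd₂0 : d₂ = E.zero :=
      E.eq_zero_of_le_zero (hsb d₂ ⟨e₂, hB⟩
        (E.le_trans (E.le_trans hd₂d hd2) hcb))
    rw [hd₁0, hd₂0, E.zero_add] at h₁
    have : d = E.zero := (Option.some.inj h₁).symm
    rw [this]
    exact E.le_zero_self
end
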